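/- arXiv:1304.0956 — 4 statements merged into one kernel-verified Lean document; each statement's English description precedes it below -/
import Mathlib

section
/- The dimension of the intersection of S²E ⊗ S²F ⊗ S with the kernel of the prolongation projection (the symmetric part of the space of quadratic monogenic spinors for the k-Dirac operator) equals s·C(n,2)·C(k+1,2), where s = dim S, E = C^k, F = C^n. -/
open Finset

/-- The symmetric part of the first prolongation of the tableau of the k-Dirac operator:
coefficient tensors `a : E ⊗ E ⊗ F ⊗ F ⊗ S` (written in the bases of `E = ℂᵏ`, `F = ℂⁿ`)
which are symmetric in the `E`-indices and in the `F`-indices (i.e. lie in `S²E ⊗ S²F ⊗ S`)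
and lie in the kernel of the prolongation projection `Id ⊗ π`, where
`π(ε ⊗ s) = ε·s` is Clifford multiplication by the action `c`. -/
def symProlongation (n k : ℕ) (S : Type*) [AddCommGroup S] [Module ℂ S]
    (c : Fin n → S →ₗ[ℂ] S) :
    Submodule ℂ (Fin k → Fin k → Fin n → Fin n → S) where
  carrier := {a | (∀ i j α β, a j i α β = a i j α β) ∧ (∀ i j α β, a i j β α = a i j α β) ∧
      (∀ i j β, ∑ α, c α (a i j α β) = 0)}
  add_mem' := by
    rintro a b ⟨h1, h2, h3⟩ ⟨g1, g2, g3⟩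
    refine ⟨fun i j α β => ?_, fun i j α β => ?_, fun i j β => ?_⟩
    · simp only [Pi.add_apply]; rw [h1, g1]
    · simp only [Pi.add_apply]; rw [h2, g2]
    · simp only [Pi.add_apply, map_add]
      rw [Finset.sum_add_distrib, h3, g3, add_zero]
  zero_mem' := by
    refine ⟨fun i j α β => rfl, fun i j α β => rfl, fun i j β => ?_⟩
    simp
  smul_mem' := by
    rintro r a ⟨h1, h2, h3⟩
    refine ⟨fun i j α β => ?_, fun i j α β => ?_, fun i j β => ?_⟩
    · simp only [Pi.smul_apply]; rw [h1]
    · simp only [Pi.smul_apply]; rw [h2]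
    · simp only [Pi.smul_apply, map_smul]
      rw [← Finset.smul_sum, h3, smul_zero]

/-! ### Auxiliary infrastructure -/

/-- Sorted pairs of indices in `Fin m`. -/
abbrev PairIdx (m : ℕ) := { p : Fin m × Fin m // p.1 ≤ p.2 }

lemma card_pairIdx (m : ℕ) : Fintype.card (PairIdx m) = (m + 1).choose 2 := by
  rw [← Fintype.card_congr (Sym2.sortEquiv (α := Fin m)), Sym2.card, Fintype.card_fin]

/-- Sort a pair of indices. -/
def sortPair {m : ℕ} (i j : Fin m) : PairIdx m :=
  if h : i ≤ j then ⟨(i, j), h⟩ else ⟨(j, i), le_of_not_ge h⟩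

lemma sortPair_comm {m : ℕ} (i j : Fin m) : sortPair j i = sortPair i j := by
  unfold sortPair
  rcases le_or_gt i j with h | h
  · rcases eq_or_lt_of_le h with rfl | h'
    · simp
    · rw [dif_pos h, dif_neg (not_le.2 h')]
  · rw [dif_pos h.le, dif_neg (not_le.2 h)]

lemma sortPair_eq {m : ℕ} (p : PairIdx m) : sortPair p.1.1 p.1.2 = p := by
  obtain ⟨⟨i, j⟩, h⟩ := p
  simp [sortPair, h]

/-- Symmetric `m × m` arrays with values in `M`. -/
def symSpace (m : ℕ) (M : Type*) [AddCommGroup M] [Module ℂ M] :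
    Submodule ℂ (Fin m → Fin m → M) where
  carrier := {a | ∀ i j, a j i = a i j}
  add_mem' := by rintro a b ha hb i j; simp [ha i j, hb i j]
  zero_mem' := fun i j => rfl
  smul_mem' := by rintro r a ha i j; simp [ha i j]

noncomputable def symEquiv (m : ℕ) (M : Type*) [AddCommGroup M] [Module ℂ M] :
    symSpace m M ≃ₗ[ℂ] (PairIdx m → M) := by
  refine LinearEquiv.ofBijective
    { toFun := fun a p => a.1 p.1.1 p.1.2
      map_add' := fun a b => rfl
      map_smul' := fun r a => rfl } ⟨?_, ?_⟩
  · intro a b hab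
    ext i j
    rcases le_total i j with h | h
    · exact congrFun hab ⟨(i, j), h⟩
    · have := congrFun hab ⟨(j, i), h⟩
      simpa [a.2 i j, b.2 i j] using this
  · intro f
    refine ⟨⟨fun i j => f (sortPair i j), fun i j => by
      simp only []; rw [sortPair_comm]⟩, ?_⟩
    funext p
    simp [sortPair_eq]

lemma finrank_pi_const (ι : Type*) [Fintype ι] (M : Type*) [AddCommGroup M] [Module ℂ M]
    [FiniteDimensional ℂ M] :
    Module.finrank ℂ (ι → M) = Fintype.card ι * Module.finrank ℂ M := by
  rw [Module.finrank_pi_fintype, Finset.sum_const, Finset.card_univ, smul_eq_mul]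

lemma finrank_symSpace (m : ℕ) (M : Type*) [AddCommGroup M] [Module ℂ M]
    [FiniteDimensional ℂ M] :
    Module.finrank ℂ (symSpace m M) = (m + 1).choose 2 * Module.finrank ℂ M := by
  rw [(symEquiv m M).finrank_eq, finrank_pi_const, card_pairIdx]

/-- Arrays symmetric in both pairs of indices. -/
def sym2Space (n k : ℕ) (S : Type*) [AddCommGroup S] [Module ℂ S] :
    Submodule ℂ (Fin k → Fin k → Fin n → Fin n → S) where
  carrier := {a | (∀ i j, a j i = a i j) ∧ (∀ i j α β, a i j β α = a i j α β)}
  add_mem' := by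
    rintro a b ⟨h1, h2⟩ ⟨g1, g2⟩
    exact ⟨fun i j => by simp [h1 i j, g1 i j],
      fun i j α β => by simp [h2 i j α β, g2 i j α β]⟩
  zero_mem' := ⟨fun i j => rfl, fun i j α β => rfl⟩
  smul_mem' := by
    rintro r a ⟨h1, h2⟩
    exact ⟨fun i j => by simp [h1 i j], fun i j α β => by simp [h2 i j α β]⟩

noncomputable def sym2Equiv (n k : ℕ) (S : Type*) [AddCommGroup S] [Module ℂ S] :
    sym2Space n k S ≃ₗ[ℂ] (PairIdx k → PairIdx n → S) := by
  refine LinearEquiv.ofBijective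
    { toFun := fun a p q => a.1 p.1.1 p.1.2 q.1.1 q.1.2
      map_add' := fun a b => rfl
      map_smul' := fun r a => rfl } ⟨?_, ?_⟩
  · intro a b hab
    have key : ∀ (x : _) (_ : x ∈ sym2Space n k S) i j α β,
        x i j α β = x (sortPair i j).1.1 (sortPair i j).1.2
          (sortPair α β).1.1 (sortPair α β).1.2 := by
      rintro x ⟨h1, h2⟩ i j α β
      unfold sortPair
      rcases le_or_gt i j with h | h <;> rcases le_or_gt α β with h' | h'
      · rw [dif_pos h, dif_pos h']
      · rw [dif_pos h, dif_neg (not_le.2 h')]; exact (h2 i j α β).symm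
      · rw [dif_neg (not_le.2 h), dif_pos h']
        exact congrFun (congrFun (h1 j i) α) β
      · rw [dif_neg (not_le.2 h), dif_neg (not_le.2 h')]
        exact (h2 i j α β).symm.trans (congrFun (congrFun (h1 j i) β) α)
    ext i j α β
    rw [key a.1 a.2, key b.1 b.2]
    exact congrFun (congrFun hab (sortPair i j)) (sortPair α β)
  · intro f
    refine ⟨⟨fun i j α β => f (sortPair i j) (sortPair α β), ?_, ?_⟩, ?_⟩
    · intro i j; funext α β; simp only []; rw [sortPair_comm]
    · intro i j α β; simp only []; rw [sortPair_comm α β]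
    · funext p q
      simp [sortPair_eq]

lemma finrank_sym2Space (n k : ℕ) (S : Type*) [AddCommGroup S] [Module ℂ S]
    [FiniteDimensional ℂ S] :
    Module.finrank ℂ (sym2Space n k S)
      = (k + 1).choose 2 * ((n + 1).choose 2 * Module.finrank ℂ S) := by
  rw [(sym2Equiv n k S).finrank_eq, finrank_pi_const, finrank_pi_const, card_pairIdx,
    card_pairIdx]

/-! ### The Clifford construction -/

section Clifford

variable {n : ℕ} {S : Type*} [AddCommGroup S] [Module ℂ S] (c : Fin n → S →ₗ[ℂ] S)

/-- A symmetric preimage of `v` under the prolongation projection. -/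
noncomputable def bfun (v : Fin n → S) : Fin n → Fin n → S := fun α β =>
  (-((n : ℂ) + 2))⁻¹ • (c α (v β) + c β (v α) + (if α = β then ∑ γ, c γ (v γ) else 0))

lemma bfun_symm (v : Fin n → S) (α β : Fin n) : bfun c v β α = bfun c v α β := by
  unfold bfun
  have hif : (if β = α then ∑ γ, c γ (v γ) else 0) = (if α = β then ∑ γ, c γ (v γ) else 0) := by
    by_cases h : α = β <;> simp [h, eq_comm]
  rw [hif, add_comm (c β (v α)) (c α (v β))]

variable (hc : ∀ α β : Fin n, c α ∘ₗ c β + c β ∘ₗ c α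
      = if α = β then (-2 : ℂ) • LinearMap.id else 0)

include hc

lemma clifford_sq (α : Fin n) (x : S) : c α (c α x) = -x := by
  have h := congrArg (fun f => f x) (hc α α)
  simp only [LinearMap.add_apply, LinearMap.comp_apply, if_pos rfl, LinearMap.smul_apply,
    LinearMap.id_apply] at h
  have h2 : (2 : ℂ) • c α (c α x) = (-2 : ℂ) • x := by
    rw [two_smul]; exact h
  have := congrArg (fun y => ((2 : ℂ)⁻¹) • y) h2
  simp only [smul_smul] at this
  norm_num at this
  simpa [neg_smul] using this

lemma clifford_anti (α β : Fin n) (x : S) :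
    c α (c β x) = (if α = β then (-2 : ℂ) • x else 0) - c β (c α x) := by
  have h := congrArg (fun f => f x) (hc α β)
  by_cases hab : α = β <;>
    simp only [LinearMap.add_apply, LinearMap.comp_apply, hab, if_pos, if_neg,
      LinearMap.smul_apply, LinearMap.id_apply, LinearMap.zero_apply, if_true] at h ⊢ <;>
  · rw [eq_sub_iff_add_eq]; simpa using h

lemma bfun_sum (v : Fin n → S) (β : Fin n) : ∑ α, c α (bfun c v α β) = v β := by
  have key : ∀ α, c α (bfun c v α β) = (-((n : ℂ) + 2))⁻¹ •
      (c α (c α (v β)) + c α (c β (v α)) + (if α = β then c α (∑ γ, c γ (v γ)) else 0)) := by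
    intro α
    unfold bfun
    rw [map_smul, map_add, map_add]
    congr 2
    by_cases h : α = β <;> simp [h]
  simp_rw [key]
  rw [← Finset.smul_sum]
  have s1 : ∑ α, (c α (c α (v β)) + c α (c β (v α)) +
      (if α = β then c α (∑ γ, c γ (v γ)) else 0))
      = (∑ α, c α (c α (v β))) + (∑ α, c α (c β (v α)))
        + ∑ α, (if α = β then c α (∑ γ, c γ (v γ)) else 0) := by
    rw [Finset.sum_add_distrib, Finset.sum_add_distrib]
  rw [s1]
  have e1 : ∑ α, c α (c α (v β)) = -((n : ℂ) • v β) := by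
    simp_rw [clifford_sq c hc]
    rw [Finset.sum_const, Finset.card_univ, Fintype.card_fin, smul_neg, neg_inj,
      Nat.cast_smul_eq_nsmul]
  have e2 : ∑ α, c α (c β (v α)) = (-2 : ℂ) • v β - c β (∑ γ, c γ (v γ)) := by
    simp_rw [clifford_anti c hc _ β]
    rw [Finset.sum_sub_distrib]
    congr 1
    · simp
    · rw [map_sum]
  have e3 : ∑ α, (if α = β then c α (∑ γ, c γ (v γ)) else 0) = c β (∑ γ, c γ (v γ)) := by
    simp
  rw [e1, e2, e3]
  have hne : (-((n : ℂ) + 2)) ≠ 0 := by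
    simp only [ne_eq, neg_eq_zero]
    exact_mod_cast (Nat.cast_add_one_ne_zero (R := ℂ) (n + 1))
  have : -((n : ℂ) • v β) + ((-2 : ℂ) • v β - c β (∑ γ, c γ (v γ))) + c β (∑ γ, c γ (v γ))
      = (-((n : ℂ) + 2)) • v β := by
    module
  rw [this, smul_smul, inv_mul_cancel₀ hne, one_smul]

end Clifford

/-! ### The prolongation projection as a linear map -/

/-- The prolongation projection `Id ⊗ π`. -/
noncomputable def Tmap (n k : ℕ) (S : Type*) [AddCommGroup S] [Module ℂ S]
    (c : Fin n → S →ₗ[ℂ] S) :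
    (Fin k → Fin k → Fin n → Fin n → S) →ₗ[ℂ] (Fin k → Fin k → Fin n → S) where
  toFun a := fun i j β => ∑ α, c α (a i j α β)
  map_add' a b := by
    funext i j β
    simp [Finset.sum_add_distrib]
  map_smul' r a := by
    funext i j β
    simp [Finset.smul_sum]

lemma range_Tmap (n k : ℕ) (S : Type*) [AddCommGroup S] [Module ℂ S]
    (c : Fin n → S →ₗ[ℂ] S)
    (hc : ∀ α β : Fin n, c α ∘ₗ c β + c β ∘ₗ c α
      = if α = β then (-2 : ℂ) • LinearMap.id else 0) :
    LinearMap.range ((Tmap n k S c).domRestrict (sym2Space n k S))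
      = symSpace k (Fin n → S) := by
  apply le_antisymm
  · rintro v ⟨⟨a, h1, h2⟩, rfl⟩
    intro i j
    funext β
    show (∑ α, c α (a j i α β)) = ∑ α, c α (a i j α β)
    rw [h1 i j]
  · intro v hv
    have hv' : ∀ i j : Fin k, v j i = v i j := hv
    refine ⟨⟨fun i j => bfun c (v i j), fun i j => ?_, fun i j α β => ?_⟩, ?_⟩
    · show bfun c (v j i) = bfun c (v i j)
      rw [hv' i j]
    · exact bfun_symm c (v i j) α β
    · funext i j β
      exact bfun_sum c hc (v i j) β

lemma symProlongation_eq (n k : ℕ) (S : Type*) [AddCommGroup S] [Module ℂ S]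
    (c : Fin n → S →ₗ[ℂ] S) :
    symProlongation n k S c
      = (LinearMap.ker ((Tmap n k S c).domRestrict (sym2Space n k S))).map
          (sym2Space n k S).subtype := by
  ext a
  simp only [Submodule.mem_map, LinearMap.mem_ker, LinearMap.domRestrict_apply,
    Submodule.coe_subtype]
  constructor
  · rintro ⟨h1, h2, h3⟩
    refine ⟨⟨a, fun i j => funext fun α => funext fun β => h1 i j α β, h2⟩, ?_, rfl⟩
    funext i j β
    exact h3 i j β
  · rintro ⟨⟨b, hb1, hb2⟩, hb0, rfl⟩
    exact ⟨fun i j α β => congrFun (congrFun (hb1 i j) α) β, hb2,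
      fun i j β => congrFun (congrFun (congrFun hb0 i) j) β⟩

/-- The dimension of the intersection of `S²E ⊗ S²F ⊗ S` with the kernel of the prolongation
projection (the symmetric part of the space of quadratic monogenic spinors of the k-Dirac
operator) equals `s·C(n,2)·C(k+1,2)`, where `s = dim S` and the action `c` of the orthonormal
basis of `F = ℂⁿ` on the spinor module `S` satisfies the Clifford relations. -/
theorem dim_sym_quadratic_monogenic (n k s : ℕ) (hn : 3 ≤ n) (hk : 2 ≤ k)
    (S : Type*) [AddCommGroup S] [Module ℂ S] [FiniteDimensional ℂ S]
    (hs : Module.finrank ℂ S = s) (c : Fin n → S →ₗ[ℂ] S)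
    (hc : ∀ α β : Fin n, c α ∘ₗ c β + c β ∘ₗ c α
      = if α = β then (-2 : ℂ) • LinearMap.id else 0) :
    Module.finrank ℂ (symProlongation n k S c) = s * n.choose 2 * (k + 1).choose 2 := by
  have hrn := LinearMap.finrank_range_add_finrank_ker
    ((Tmap n k S c).domRestrict (sym2Space n k S))
  rw [range_Tmap n k S c hc, finrank_sym2Space] at hrn
  have hrange : Module.finrank ℂ (symSpace k (Fin n → S))
      = (k + 1).choose 2 * (n * s) := by
    rw [finrank_symSpace, finrank_pi_const, Fintype.card_fin, hs]
  rw [hrange, hs] at hrn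
  have hker : Module.finrank ℂ (symProlongation n k S c)
      = Module.finrank ℂ (LinearMap.ker ((Tmap n k S c).domRestrict (sym2Space n k S))) := by
    rw [symProlongation_eq, Submodule.finrank_map_subtype_eq]
  rw [hker]
  have hch : (n + 1).choose 2 = n.choose 2 + n := by
    rw [Nat.choose_succ_succ, Nat.choose_one_right, Nat.add_comm]
  rw [hch] at hrn
  have expand : (k + 1).choose 2 * ((n.choose 2 + n) * s)
      = (k + 1).choose 2 * (n * s) + s * n.choose 2 * (k + 1).choose 2 := by ring
  omega
end

section
/- For so(2m,C) with m ≥ 3, the Weyl dimension formula gives dim(F ⊠ Λ²F ⊠ S₊) = ((2m+1)(2m−1)(2m−3)·2^{m−1})/3, where the highest weight is (2+1/2, 1+1/2, 1/2, …, 1/2). -/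
/-!
Read the coordinates backwards, so that `ρ = (0, 1, …, m − 1)` and
`λ + ρ = (1/2, 3/2, …, m − 5/2, m − 1/2, m + 3/2)`. The Weyl quotient is then the product over `k`
of the rows `∏_{l < k} (a_k² − a_l²) / (k² − l²)`, and every row telescopes because `a_l = l + 1/2`
(the entries of the half-spin weight) for `l < m − 2`. Rows `1, …, m − 3` contribute `2` each, as
they do in `dim S₊ = 2^{m−1}`; the last two rows contribute `2(2m − 3)` and `2(2m − 1)(2m + 1)/3`.
-/

/-- The lowest form `ρ = (m−1, m−2, …, 1, 0)` of `so(2m,ℂ)`. -/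
noncomputable def rhoD (m : ℕ) : Fin m → ℚ := fun i => (m : ℚ) - 1 - (i : ℕ)

/-- The highest weight `(2+1/2, 1+1/2, 1/2, …, 1/2)` of `F ⊠ Λ²F ⊠ S₊` for `so(2m,ℂ)`. -/
noncomputable def lamFL2D (m : ℕ) : Fin m → ℚ :=
  fun i => if (i : ℕ) = 0 then 2 + 1/2 else if (i : ℕ) = 1 then 1 + 1/2 else 1/2

open Finset

theorem Finset.prod_range_div_of_ne_zero {G₀ : Type*} [CommGroupWithZero G₀] (f : ℕ → G₀)
    {n : ℕ} (hf : ∀ i ≤ n, f i ≠ 0) : ∏ i ∈ range n, f (i + 1) / f i = f n / f 0 := by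
  induction n with
  | zero => simp [div_self (hf 0 le_rfl)]
  | succ n ih =>
    rw [prod_range_succ, ih fun i hi => hf i (by omega), mul_comm,
      div_mul_div_cancel₀ (hf n (by omega))]

theorem prod_range_row_half {k : ℕ} (hk : 0 < k) :
    ∏ l ∈ range k, (((k : ℚ) + 1/2) ^ 2 - ((l : ℚ) + 1/2) ^ 2) / ((k : ℚ) ^ 2 - (l : ℚ) ^ 2)
      = 2 := by
  have hfactor : ∀ l ∈ range k,
      (((k : ℚ) + 1/2) ^ 2 - ((l : ℚ) + 1/2) ^ 2) / ((k : ℚ) ^ 2 - (l : ℚ) ^ 2)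
        = ((k : ℚ) + (l + 1 : ℕ)) / ((k : ℚ) + l) := by
    intro l hl
    have hlk : (l : ℚ) < k := by exact_mod_cast mem_range.1 hl
    rw [div_eq_div_iff (by nlinarith) (by positivity)]
    push_cast; ring
  rw [prod_congr rfl hfactor,
    prod_range_div_of_ne_zero (fun l => (k : ℚ) + l) fun i _ => by positivity]
  field_simp; ring

theorem prod_range_prod_range_row_half (n : ℕ) :
    ∏ k ∈ range (n + 1), ∏ l ∈ range k,
      (((k : ℚ) + 1/2) ^ 2 - ((l : ℚ) + 1/2) ^ 2) / ((k : ℚ) ^ 2 - (l : ℚ) ^ 2) = 2 ^ n := by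
  rw [prod_range_succ', prod_range_zero, mul_one]
  simp_rw [prod_range_row_half (Nat.succ_pos _), prod_const, card_range]

theorem prod_range_row_threeHalves {k : ℕ} (hk : 0 < k) :
    ∏ l ∈ range k, (((k : ℚ) + 3/2) ^ 2 - ((l : ℚ) + 1/2) ^ 2) / ((k : ℚ) ^ 2 - (l : ℚ) ^ 2)
      = 2 * (2 * (k : ℚ) + 1) := by
  set f : ℕ → ℚ := fun l => ((k : ℚ) + l) * (k + 1 + l) / (k + 1 - l) with hf
  have hfactor : ∀ l ∈ range k,
      (((k : ℚ) + 3/2) ^ 2 - ((l : ℚ) + 1/2) ^ 2) / ((k : ℚ) ^ 2 - (l : ℚ) ^ 2)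
        = f (l + 1) / f l := by
    intro l hl
    have hlk : (l : ℚ) + 1 ≤ k := by exact_mod_cast mem_range.1 hl
    have : (k : ℚ) + 1 - (l + 1) ≠ 0 := by linarith
    simp only [hf, div_div_div_eq]
    rw [div_eq_div_iff (by nlinarith) (by push_cast; positivity)]
    push_cast; ring
  rw [prod_congr rfl hfactor, prod_range_div_of_ne_zero f fun i hi => ?_]
  · simp only [hf]; field_simp; ring
  · have : (i : ℚ) ≤ k := by exact_mod_cast hi
    have : (k : ℚ) + 1 - i ≠ 0 := by linarith
    simp only [hf]; positivity

theorem prod_range_row_sevenHalves (k : ℕ) :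
    ∏ l ∈ range k,
        (((k : ℚ) + 7/2) ^ 2 - ((l : ℚ) + 1/2) ^ 2) / (((k : ℚ) + 1) ^ 2 - (l : ℚ) ^ 2)
      = (2 * (k : ℚ) + 1) * (2 * k + 3) / 3 := by
  set f : ℕ → ℚ :=
    fun l => ((k : ℚ) + 1 + l) * (k + 2 + l) * (k + 3 + l) / ((k + 2 - l) * (k + 3 - l)) with hf
  have hfactor : ∀ l ∈ range k,
      (((k : ℚ) + 7/2) ^ 2 - ((l : ℚ) + 1/2) ^ 2) / (((k : ℚ) + 1) ^ 2 - (l : ℚ) ^ 2)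
        = f (l + 1) / f l := by
    intro l hl
    have hlk : (l : ℚ) + 1 ≤ k := by exact_mod_cast mem_range.1 hl
    have : (k : ℚ) + 2 - (l + 1) ≠ 0 := by linarith
    have : (k : ℚ) + 3 - (l + 1) ≠ 0 := by linarith
    simp only [hf, div_div_div_eq]
    rw [div_eq_div_iff (by nlinarith) (by push_cast; positivity)]
    push_cast; ring
  rw [prod_congr rfl hfactor, prod_range_div_of_ne_zero f fun i hi => ?_]
  · simp only [hf]; field_simp; ring
  · have : (i : ℚ) ≤ k := by exact_mod_cast hi
    have : (k : ℚ) + 2 - i ≠ 0 := by linarith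
    have : (k : ℚ) + 3 - i ≠ 0 := by linarith
    simp only [hf]; positivity

theorem Fin.prod_univ_prod_Ioi_eq_prod_Iio_rev {M : Type*} [CommMonoid M] {m : ℕ}
    (f : Fin m → Fin m → M) :
    ∏ i, ∏ j ∈ Ioi i, f i j = ∏ i, ∏ j ∈ Iio i, f (Fin.rev i) (Fin.rev j) := by
  rw [← Equiv.prod_comp Fin.revPerm]
  refine prod_congr rfl fun i _ => ?_
  rw [Fin.revPerm_apply, ← Fin.map_revPerm_Iio, prod_map]
  rfl

theorem Fin.prod_univ_prod_Iio_eq_prod_range {M : Type*} [CommMonoid M] {m : ℕ}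
    (f : ℕ → ℕ → M) :
    ∏ i : Fin m, ∏ j ∈ Iio i, f i j = ∏ k ∈ range m, ∏ l ∈ range k, f k l := by
  rw [← Fin.prod_univ_eq_prod_range (fun k => ∏ l ∈ range k, f k l)]
  refine prod_congr rfl fun i _ => ?_
  rw [← Nat.Iio_eq_range, ← Fin.map_valEmbedding_Iio, prod_map]
  rfl

/-- `∏_{α ∈ Φ⁺} ⟨v, α⟩` for `Φ⁺ = {e_i ± e_j : i < j}`. -/
def weylProdD {m : ℕ} (v : Fin m → ℚ) : ℚ :=
  ∏ i, ∏ j ∈ Ioi i, (v i - v j) * (v i + v j)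

theorem weylProdD_comp_rev {m : ℕ} (v : ℕ → ℚ) :
    weylProdD (fun i : Fin m => v (m - 1 - i))
      = ∏ k ∈ range m, ∏ l ∈ range k, (v k ^ 2 - v l ^ 2) := by
  rw [weylProdD, Fin.prod_univ_prod_Ioi_eq_prod_Iio_rev, ← Fin.prod_univ_prod_Iio_eq_prod_range]
  refine prod_congr rfl fun i _ => prod_congr rfl fun j _ => ?_
  rw [Fin.val_rev, Fin.val_rev, show m - 1 - (m - (i + 1)) = i by omega,
    show m - 1 - (m - (j + 1)) = j by omega]
  ring

/-- `λ + ρ` read from the last coordinate: `(1/2, 3/2, …, m − 5/2, m − 1/2, m + 3/2)`. -/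
def shiftedWeightRev (m k : ℕ) : ℚ :=
  k + 1/2 + if k + 1 = m then 2 else if k + 2 = m then 1 else 0

theorem natCast_sub_one_sub {m i : ℕ} (hi : i < m) : ((m - 1 - i : ℕ) : ℚ) = m - 1 - i := by
  rw [Nat.sub_sub, Nat.cast_sub (by omega)]
  push_cast; ring

theorem lamFL2D_add_rhoD (m : ℕ) :
    (fun i => lamFL2D m i + rhoD m i) = fun i : Fin m => shiftedWeightRev m (m - 1 - i) := by
  funext i
  simp only [lamFL2D, rhoD, shiftedWeightRev, natCast_sub_one_sub i.isLt]
  split_ifs <;> first | omega | ring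

theorem rhoD_eq_natCast (m : ℕ) : rhoD m = fun i : Fin m => ((m - 1 - i : ℕ) : ℚ) := by
  funext i
  rw [rhoD, natCast_sub_one_sub i.isLt]

theorem shiftedWeightRev_of_add_two_lt {m k : ℕ} (hk : k + 2 < m) :
    shiftedWeightRev m k = k + 1/2 := by
  rw [shiftedWeightRev, if_neg (by omega), if_neg (by omega), add_zero]

theorem shiftedWeightRev_penultimate (n : ℕ) : shiftedWeightRev (n + 3) (n + 1) = n + 5/2 := by
  rw [shiftedWeightRev, if_neg (by omega), if_pos rfl]
  push_cast; ring

theorem shiftedWeightRev_last (n : ℕ) : shiftedWeightRev (n + 3) (n + 2) = n + 9/2 := by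
  rw [shiftedWeightRev, if_pos rfl]
  push_cast; ring

theorem prod_range_prod_range_shiftedWeightRev_spin (n : ℕ) :
    ∏ k ∈ range (n + 1), ∏ l ∈ range k,
      (shiftedWeightRev (n + 3) k ^ 2 - shiftedWeightRev (n + 3) l ^ 2)
        / ((k : ℚ) ^ 2 - (l : ℚ) ^ 2) = 2 ^ n := by
  rw [← prod_range_prod_range_row_half n]
  refine prod_congr rfl fun k hk => prod_congr rfl fun l hl => ?_
  rw [mem_range] at hk hl
  rw [shiftedWeightRev_of_add_two_lt (by omega), shiftedWeightRev_of_add_two_lt (by omega)]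

theorem prod_range_shiftedWeightRev_penultimate_row (n : ℕ) :
    ∏ l ∈ range (n + 1),
      (shiftedWeightRev (n + 3) (n + 1) ^ 2 - shiftedWeightRev (n + 3) l ^ 2)
        / (((n + 1 : ℕ) : ℚ) ^ 2 - (l : ℚ) ^ 2) = 2 * (2 * ((n + 1 : ℕ) : ℚ) + 1) := by
  rw [← prod_range_row_threeHalves n.succ_pos]
  refine prod_congr rfl fun l hl => ?_
  rw [shiftedWeightRev_penultimate,
    shiftedWeightRev_of_add_two_lt (by have := mem_range.1 hl; omega)]
  push_cast; ring

theorem prod_range_shiftedWeightRev_last_row (n : ℕ) :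
    ∏ l ∈ range (n + 1),
      (shiftedWeightRev (n + 3) (n + 2) ^ 2 - shiftedWeightRev (n + 3) l ^ 2)
        / (((n + 2 : ℕ) : ℚ) ^ 2 - (l : ℚ) ^ 2)
      = (2 * ((n + 1 : ℕ) : ℚ) + 1) * (2 * ((n + 1 : ℕ) : ℚ) + 3) / 3 := by
  rw [← prod_range_row_sevenHalves (n + 1)]
  refine prod_congr rfl fun l hl => ?_
  rw [shiftedWeightRev_last,
    shiftedWeightRev_of_add_two_lt (by have := mem_range.1 hl; omega)]
  push_cast; ring

theorem prod_range_prod_range_shiftedWeightRev (n : ℕ) :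
    ∏ k ∈ range (n + 3), ∏ l ∈ range k,
      (shiftedWeightRev (n + 3) k ^ 2 - shiftedWeightRev (n + 3) l ^ 2)
        / ((k : ℚ) ^ 2 - (l : ℚ) ^ 2)
      = 2 ^ (n + 2) * (2 * n + 3) * (2 * n + 5) * (2 * n + 7) / 3 := by
  have hgap : ((n + 2 : ℕ) : ℚ) ^ 2 - ((n + 1 : ℕ) : ℚ) ^ 2 = 2 * n + 3 := by push_cast; ring
  rw [prod_range_succ, prod_range_succ, prod_range_succ _ (n + 1),
    prod_range_prod_range_shiftedWeightRev_spin, prod_range_shiftedWeightRev_penultimate_row,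
    prod_range_shiftedWeightRev_last_row, shiftedWeightRev_penultimate, shiftedWeightRev_last, hgap]
  field_simp
  push_cast
  ring

/-- For `so(2m,ℂ)`, `m ≥ 3`, the Weyl dimension formula (with `Φ⁺ = {e_i ± e_j : i < j}`,
`ρ = (m−1,…,1,0)`) gives `dim(F ⊠ Λ²F ⊠ S₊) = ((2m+1)(2m−1)(2m−3)·2^{m−1})/3` for the
highest weight `(2+1/2, 1+1/2, 1/2, …, 1/2)`. -/
theorem weyl_dim_F_L2F_spin_even (m : ℕ) (hm : 3 ≤ m) :
    (∏ i : Fin m, ∏ j ∈ Finset.Ioi i,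
        ((lamFL2D m i + rhoD m i) - (lamFL2D m j + rhoD m j))
          * ((lamFL2D m i + rhoD m i) + (lamFL2D m j + rhoD m j)))
      / (∏ i : Fin m, ∏ j ∈ Finset.Ioi i, (rhoD m i - rhoD m j) * (rhoD m i + rhoD m j))
      = (2 * (m : ℚ) + 1) * (2 * (m : ℚ) - 1) * (2 * (m : ℚ) - 3) * (2 : ℚ) ^ (m - 1) / 3 := by
  obtain ⟨n, rfl⟩ : ∃ n, m = n + 3 := ⟨m - 3, by omega⟩
  change weylProdD (fun i => lamFL2D (n + 3) i + rhoD (n + 3) i) / weylProdD (rhoD (n + 3)) = _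
  rw [lamFL2D_add_rhoD, rhoD_eq_natCast, weylProdD_comp_rev, weylProdD_comp_rev,
    ← prod_div_distrib]
  simp_rw [← prod_div_distrib]
  rw [prod_range_prod_range_shiftedWeightRev, show n + 3 - 1 = n + 2 by omega]
  push_cast
  ring
end

section
/- For so(2m+1,C) with m ≥ 2, the Weyl dimension formula gives dim(F ⊠ Λ²F ⊠ S) = ((m+1)·m·(m−1)·2^{m+3})/3, where the highest weight is (2+1/2, 1+1/2, 1/2, …, 1/2). -/
/-!
The Weyl product `W(v) = ∏_{i<j} (v_i² - v_j²) · ∏_i v_i` peels off its first coordinate: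
`W(x, v) = x ∏_j (x² - v_j²) · W(v)`. Here `λ + ρ = (m+2, m, m-2, …, 1)`, which agrees from the
third coordinate on with the staircase `(m, m-1, …, 1) = ρ + (1/2, …, 1/2)` of the spin
representation, and `W(staircase) = 2^m W(ρ)` (i.e. `dim S = 2^m`). So only two rows of the
Weyl product have to be compared, and the rows over a staircase `(k, …, 1)` are ratios of
factorials: the row of `x = k + 1 + r` equals `(2k + 1 + r)! / r!`.
-/

/-- The lowest form `ρ = (m−1/2, m−3/2, …, 3/2, 1/2)` of `so(2m+1,ℂ)`. -/
noncomputable def rhoB (m : ℕ) : Fin m → ℚ := fun i => (m : ℚ) - 1/2 - (i : ℕ)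

/-- The highest weight `(2+1/2, 1+1/2, 1/2, …, 1/2)` of `F ⊠ Λ²F ⊠ S` for `so(2m+1,ℂ)`. -/
noncomputable def lamFL2B (m : ℕ) : Fin m → ℚ :=
  fun i => if (i : ℕ) = 0 then 2 + 1/2 else if (i : ℕ) = 1 then 1 + 1/2 else 1/2

open Finset Nat

section CommRing

variable {R : Type*} [CommRing R]

def weylProdB {n : ℕ} (v : Fin n → R) : R :=
  (∏ i, ∏ j ∈ Ioi i, (v i - v j) * (v i + v j)) * ∏ i, v i

def weylRowB {n : ℕ} (x : R) (v : Fin n → R) : R :=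
  x * ∏ j, (x - v j) * (x + v j)

theorem weylProdB_cons {n : ℕ} (x : R) (v : Fin n → R) :
    weylProdB (Fin.cons x v : Fin (n + 1) → R) = weylRowB x v * weylProdB v := by
  simp only [weylProdB, weylRowB, Fin.prod_univ_succ, Fin.prod_Ioi_zero, Fin.prod_Ioi_succ,
    Fin.cons_zero, Fin.cons_succ]
  ring

theorem weylRowB_cons {n : ℕ} (x y : R) (v : Fin n → R) :
    weylRowB x (Fin.cons y v : Fin (n + 1) → R) = (x - y) * (x + y) * weylRowB x v := by
  simp only [weylRowB, Fin.prod_univ_succ, Fin.cons_zero, Fin.cons_succ]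
  ring

theorem weylRowB_sub_natCast {k : ℕ} (x c : R) :
    weylRowB x (fun j : Fin k => c - (j : ℕ)) =
      x * ((∏ j ∈ range k, (x - c + j)) * ∏ j ∈ range k, (x + c - j)) := by
  rw [weylRowB, ← prod_mul_distrib,
    ← Fin.prod_univ_eq_prod_range (fun j => (x - c + j) * (x + c - j))]
  congr 1
  refine Fintype.prod_congr _ _ fun j => ?_
  ring

end CommRing

theorem factorial_mul_prod_range_add_one_add (a n : ℕ) :
    (a ! : ℚ) * ∏ j ∈ range n, ((a : ℚ) + 1 + j) = ((a + n) ! : ℚ) := by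
  induction n with
  | zero => simp
  | succ n ih =>
    rw [prod_range_succ, ← mul_assoc, ih, ← add_assoc, factorial_succ (a + n)]
    push_cast
    ring

theorem factorial_mul_prod_range_add_sub (a n : ℕ) :
    (a ! : ℚ) * ∏ j ∈ range n, ((a : ℚ) + n - j) = ((a + n) ! : ℚ) := by
  induction n with
  | zero => simp
  | succ n ih =>
    have hshift : ∏ j ∈ range n, ((a : ℚ) + ↑(n + 1) - ↑(j + 1)) =
        ∏ j ∈ range n, ((a : ℚ) + n - j) :=
      prod_congr rfl fun j _ => by push_cast; ring
    rw [prod_range_succ', hshift, ← add_assoc, factorial_succ (a + n), Nat.cast_mul, ← ih]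
    push_cast
    ring

/-- `ρ + (1/2, …, 1/2)`, the spin highest weight shifted by `ρ`. -/
def stairB (n : ℕ) : Fin n → ℚ := fun i => (n : ℚ) - (i : ℕ)

theorem stairB_succ (n : ℕ) : stairB (n + 1) = Fin.cons ((n : ℚ) + 1) (stairB n) := by
  ext i
  refine Fin.cases ?_ (fun j => ?_) i
  · simp [stairB]
  · simp [stairB]

theorem rhoB_succ (n : ℕ) : rhoB (n + 1) = Fin.cons ((n : ℚ) + 1 / 2) (rhoB n) := by
  ext i
  refine Fin.cases ?_ (fun j => ?_) i
  · simp [rhoB]; ring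
  · simp [rhoB]; ring

theorem factorial_mul_weylRowB_stairB (k r : ℕ) {x : ℚ} (hx : x = k + 1 + r) :
    (r ! : ℚ) * weylRowB x (stairB k) = ((2 * k + 1 + r) ! : ℚ) := by
  have hasc := factorial_mul_prod_range_add_one_add r k
  have hdesc := factorial_mul_prod_range_add_sub (k + 1 + r) k
  have hfac : ((k + 1 + r) ! : ℚ) = (k + 1 + r) * (r + k) ! := by
    rw [show k + 1 + r = (r + k) + 1 by ring, factorial_succ]; push_cast; ring
  unfold stairB
  rw [weylRowB_sub_natCast, hx]
  have hasc' : ∏ j ∈ range k, ((k : ℚ) + 1 + r - k + j) = ∏ j ∈ range k, ((r : ℚ) + 1 + j) :=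
    prod_congr rfl fun j _ => by ring
  have hdesc' : ∏ j ∈ range k, ((k : ℚ) + 1 + r + k - j) =
      ∏ j ∈ range k, (((k + 1 + r : ℕ) : ℚ) + k - j) :=
    prod_congr rfl fun j _ => by push_cast; ring
  rw [show k + 1 + r + k = 2 * k + 1 + r by ring] at hdesc
  rw [hasc', hdesc']
  linear_combination ((k + 1 + r : ℚ) * ∏ j ∈ range k, (((k + 1 + r : ℕ) : ℚ) + k - j)) * hasc
    - (∏ j ∈ range k, (((k + 1 + r : ℕ) : ℚ) + k - j)) * hfac + hdesc

theorem two_mul_weylRowB_rhoB (k : ℕ) :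
    2 * weylRowB ((k : ℚ) + 1 / 2) (rhoB k) = ((2 * k + 1) ! : ℚ) := by
  have hasc := factorial_mul_prod_range_add_one_add 0 k
  have hdesc := factorial_mul_prod_range_add_sub k k
  have hfac : ((2 * k + 1) ! : ℚ) = (2 * k + 1) * (2 * k) ! := by
    rw [factorial_succ]; push_cast; ring
  rw [zero_add, factorial_zero, cast_one, one_mul] at hasc
  rw [show k + k = 2 * k by ring] at hdesc
  unfold rhoB
  rw [weylRowB_sub_natCast]
  have hasc' : ∏ j ∈ range k, ((k : ℚ) + 1 / 2 - (k - 1 / 2) + j) =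
      ∏ j ∈ range k, (((0 : ℕ) : ℚ) + 1 + j) :=
    prod_congr rfl fun j _ => by push_cast; ring
  have hdesc' : ∏ j ∈ range k, ((k : ℚ) + 1 / 2 + (k - 1 / 2) - j) =
      ∏ j ∈ range k, ((k : ℚ) + k - j) :=
    prod_congr rfl fun j _ => by ring
  rw [hasc', hdesc', hfac]
  linear_combination ((2 * k + 1 : ℚ) * ∏ j ∈ range k, ((k : ℚ) + k - j)) * hasc
    + (2 * k + 1 : ℚ) * hdesc

theorem weylProdB_stairB (n : ℕ) : weylProdB (stairB n) = 2 ^ n * weylProdB (rhoB n) := by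
  induction n with
  | zero => simp [weylProdB]
  | succ n ih =>
    have hrow := factorial_mul_weylRowB_stairB n 0 (x := (n : ℚ) + 1) (by simp)
    rw [stairB_succ, rhoB_succ, weylProdB_cons, weylProdB_cons, ih, pow_succ]
    rw [factorial_zero, cast_one, one_mul, add_zero, ← two_mul_weylRowB_rhoB n] at hrow
    rw [hrow]
    ring

theorem weylProdB_stairB_ne_zero (n : ℕ) : weylProdB (stairB n) ≠ 0 := by
  induction n with
  | zero => simp [weylProdB]
  | succ n ih =>
    have hrow := factorial_mul_weylRowB_stairB n 0 (x := (n : ℚ) + 1) (by simp)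
    rw [factorial_zero, cast_one, one_mul] at hrow
    rw [stairB_succ, weylProdB_cons, hrow]
    exact mul_ne_zero (by positivity) ih

theorem lamFL2B_add_rhoB (k : ℕ) :
    (fun i => lamFL2B (k + 2) i + rhoB (k + 2) i) =
      Fin.cons ((k : ℚ) + 4) (Fin.cons ((k : ℚ) + 2) (stairB k)) := by
  ext i
  refine Fin.cases ?_ (Fin.cases ?_ fun j => ?_) i
  · simp [lamFL2B, rhoB]; ring
  · simp [lamFL2B, rhoB]; ring
  · simp [lamFL2B, rhoB, stairB]; ring

theorem three_mul_weylProdB_lamFL2B_add_rhoB (k : ℕ) :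
    3 * weylProdB (fun i => lamFL2B (k + 2) i + rhoB (k + 2) i) =
      8 * ((k : ℚ) + 1) * ((k : ℚ) + 2) * ((k : ℚ) + 3) * weylProdB (stairB (k + 2)) := by
  have h3 := factorial_mul_weylRowB_stairB k 3 (x := (k : ℚ) + 4) (by push_cast; ring)
  have h0 := factorial_mul_weylRowB_stairB k 0 (x := (k : ℚ) + 1) (by simp)
  simp only [factorial, succ_eq_add_one] at h3 h0
  push_cast at h3 h0
  rw [lamFL2B_add_rhoB, stairB_succ, stairB_succ, weylProdB_cons, weylProdB_cons, weylRowB_cons,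
    weylProdB_cons, weylProdB_cons, weylRowB_cons]
  rw [show ((k + 1 : ℕ) : ℚ) + 1 = k + 2 by push_cast; ring]
  linear_combination
    (2 * (k : ℚ) + 6) * weylRowB ((k : ℚ) + 2) (stairB k) * weylProdB (stairB k) * h3
      - 8 * ((k : ℚ) + 1) * (k + 2) * (k + 3) * (2 * k + 3) * weylRowB ((k : ℚ) + 2) (stairB k)
        * weylProdB (stairB k) * h0

/-- For `so(2m+1,ℂ)`, `m ≥ 2`, the Weyl dimension formula (with
`Φ⁺ = {e_i ± e_j : i < j} ∪ {e_i}`, `ρ = (m−1/2, …, 1/2)`) gives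
`dim(F ⊠ Λ²F ⊠ S) = ((m+1)·m·(m−1)·2^{m+3})/3` for the highest weight
`(2+1/2, 1+1/2, 1/2, …, 1/2)`. -/
theorem weyl_dim_F_L2F_spin_odd (m : ℕ) (hm : 2 ≤ m) :
    ((∏ i : Fin m, ∏ j ∈ Finset.Ioi i,
        ((lamFL2B m i + rhoB m i) - (lamFL2B m j + rhoB m j))
          * ((lamFL2B m i + rhoB m i) + (lamFL2B m j + rhoB m j)))
        * ∏ i : Fin m, (lamFL2B m i + rhoB m i))
      / ((∏ i : Fin m, ∏ j ∈ Finset.Ioi i, (rhoB m i - rhoB m j) * (rhoB m i + rhoB m j))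
        * ∏ i : Fin m, rhoB m i)
      = ((m : ℚ) + 1) * (m : ℚ) * ((m : ℚ) - 1) * (2 : ℚ) ^ (m + 3) / 3 := by
  obtain ⟨k, rfl⟩ : ∃ k, m = k + 2 := ⟨m - 2, by omega⟩
  change weylProdB (fun i => lamFL2B (k + 2) i + rhoB (k + 2) i) / weylProdB (rhoB (k + 2)) = _
  have hspin := weylProdB_stairB (k + 2)
  have hρ : weylProdB (rhoB (k + 2)) ≠ 0 := by
    intro h
    exact weylProdB_stairB_ne_zero (k + 2) (by rw [hspin, h, mul_zero])
  rw [div_eq_iff hρ]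
  have hlam := three_mul_weylProdB_lamFL2B_add_rhoB k
  rw [hspin] at hlam
  push_cast
  linear_combination hlam / 3
end

section
/- For n ≥ 3 and s ≥ 1, the equality s·∑_{i=1}^{2n−1} i·(2n−i) − (2n−1)s = s·(2n−1)(4n²+2n−6)/6 holds, and moreover s·C(2n,3) − 2s(n−1) + s·(C(2n−1,2) − 1) + 2s(n−1) + s equals the same quantity; hence equality holds in the Cartan test for the first prolongation of the parabolic 2-Dirac operator. -/
/-! Both sides reduce to binomial coefficients: the weighted character sum
`∑_{i=1}^{m-1} i (m - i)` is `C(m+1, 3)`, and with `m = 2n` both the Cartan sum and the sum of the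
dimensions of the components equal `C(2n+1, 3) - (2n - 1)`. -/

open Finset

theorem sum_Icc_one_natCast (k : ℕ) : ∑ i ∈ Icc 1 k, (i : ℚ) = k * (k + 1) / 2 := by
  induction k with
  | zero => simp
  | succ k ih =>
    rw [sum_Icc_succ_top (Nat.le_add_left 1 k), ih]
    push_cast
    ring

theorem sum_Icc_one_natCast_sq (k : ℕ) :
    ∑ i ∈ Icc 1 k, (i : ℚ) ^ 2 = k * (k + 1) * (2 * k + 1) / 6 := by
  induction k with
  | zero => simp
  | succ k ih =>
    rw [sum_Icc_succ_top (Nat.le_add_left 1 k), ih]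
    push_cast
    ring

theorem Nat.cast_choose_three (a : ℕ) : (a.choose 3 : ℚ) = a * (a - 1) * (a - 2) / 6 := by
  induction a with
  | zero => simp
  | succ a ih =>
    rw [Nat.choose_succ_succ, Nat.cast_add, ih, Nat.cast_choose_two]
    push_cast
    ring

theorem sum_Icc_one_mul_sub_eq_choose_three (m : ℕ) :
    ∑ i ∈ Icc 1 (m - 1), (i : ℚ) * (m - i) = ((m + 1).choose 3 : ℚ) := by
  rw [Nat.cast_choose_three]
  cases m with
  | zero => simp
  | succ k =>
    have hsplit : ∀ i ∈ Icc 1 k, (i : ℚ) * ((k + 1 : ℕ) - i) = (k + 1) * i - i ^ 2 := by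
      intro i _
      push_cast
      ring
    rw [Nat.add_sub_cancel, sum_congr rfl hsplit, sum_sub_distrib, ← mul_sum,
      sum_Icc_one_natCast, sum_Icc_one_natCast_sq]
    push_cast
    ring

theorem parabolic_cartan_test_equality_general (n s : ℕ) (hn : 3 ≤ n) :
    ((s : ℚ) * ∑ i ∈ Finset.Icc 1 (2 * n - 1), (i : ℚ) * (2 * (n : ℚ) - (i : ℚ))
        - (2 * (n : ℚ) - 1) * (s : ℚ)
      = (s : ℚ) * (2 * (n : ℚ) - 1) * (4 * (n : ℚ) ^ 2 + 2 * (n : ℚ) - 6) / 6)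
    ∧ ((s : ℚ) * (((2 * n).choose 3 : ℕ) : ℚ) - 2 * (s : ℚ) * ((n : ℚ) - 1)
        + (s : ℚ) * ((((2 * n - 1).choose 2 : ℕ) : ℚ) - 1) + 2 * (s : ℚ) * ((n : ℚ) - 1) + (s : ℚ)
      = (s : ℚ) * (2 * (n : ℚ) - 1) * (4 * (n : ℚ) ^ 2 + 2 * (n : ℚ) - 6) / 6) := by
  constructor
  · have hsum := sum_Icc_one_mul_sub_eq_choose_three (2 * n)
    push_cast at hsum
    rw [hsum, Nat.cast_choose_three]
    push_cast
    ring
  · rw [Nat.cast_choose_three, Nat.cast_choose_two, Nat.cast_sub (by omega : 1 ≤ 2 * n)]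
    push_cast
    ring

/-- For `n ≥ 3`, `s ≥ 1`: the weighted Cartan character sum
`s·∑_{i=1}^{2n−1} i(2n−i) − (2n−1)s` equals `s(2n−1)(4n²+2n−6)/6`, and moreover
`s·C(2n,3) − 2s(n−1) + s(C(2n−1,2) − 1) + 2s(n−1) + s` equals the same quantity;
hence equality holds in the Cartan test for the first prolongation of the parabolic
2-Dirac operator. -/
theorem parabolic_cartan_test_equality (n s : ℕ) (hn : 3 ≤ n) (hs : 1 ≤ s) :
    ((s : ℚ) * ∑ i ∈ Finset.Icc 1 (2 * n - 1), (i : ℚ) * (2 * (n : ℚ) - (i : ℚ))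
        - (2 * (n : ℚ) - 1) * (s : ℚ)
      = (s : ℚ) * (2 * (n : ℚ) - 1) * (4 * (n : ℚ) ^ 2 + 2 * (n : ℚ) - 6) / 6)
    ∧ ((s : ℚ) * (((2 * n).choose 3 : ℕ) : ℚ) - 2 * (s : ℚ) * ((n : ℚ) - 1)
        + (s : ℚ) * ((((2 * n - 1).choose 2 : ℕ) : ℚ) - 1) + 2 * (s : ℚ) * ((n : ℚ) - 1) + (s : ℚ)
      = (s : ℚ) * (2 * (n : ℚ) - 1) * (4 * (n : ℚ) ^ 2 + 2 * (n : ℚ) - 6) / 6) :=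
  parabolic_cartan_test_equality_general n s hn
end
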